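/- arXiv:1907.05221 — 2 statements merged into one kernel-verified Lean document; each statement's English description precedes it below -/
import Mathlib

section
/- Let (u, v, ρ, s) be a C¹ supersonic solution of the smooth-flow 2D steady full Euler system on U, with flow angle σ, Mach angle A ∈ (0, π/2), α = σ + A, β = σ − A, κ = 2/(γ−1), j = c/(γ(γ−1)s), Ω = (κ−1)/(κ+1) − tan²A, and ω = u_y − vₓ. Then on U: c∂₊β = −(1+κ) tan A · ∂₊c + ω sin²A tan A + j tan A · ∂₊s; c∂₊α = −((1+κ)/2) Ω sin 2A · ∂₊c − ω sin²A tan A + j tan A cos 2A · ∂₊s; c∂₋α = (1+κ) tan A · ∂₋c + ω sin²A tan A − j tan A · ∂₋s; and c∂₋β = ((1+κ)/2) Ω sin 2A · ∂₋c − ω sin²A tan A − j tan A cos 2A · ∂₋s. -/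
/-!
In the frame `e = (cos σ, sin σ)`, `n = (-sin σ, cos σ)` the Euler system at a point becomes a
handful of linear relations between the differentials of `q, σ, A, c, s`. Since `P = sρ^γ` and
`c² = γsρ^(γ-1)` give `dP/ρ = κc dc − cj ds`, momentum along `e` is Bernoulli's law
`q ∂ₑq + κc ∂ₑc = 0`, momentum along `n` reads `q² ∂ₑσ + κc ∂ₙc − cj ∂ₙs = 0`, continuity
becomes `cos²A ∂ₑq = q sin²A ∂ₙσ`, and `∂ₑs = 0`. Along a characteristic direction
`w = cos A e + ε sin A n` (`ε = ±1` for `C±`) these give `q ∂σ = ε cos A (j ∂s − κ ∂c)` and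
Crocco's relation `q ∂q + κc ∂c = εcω + cj ∂s`; the latter, with `c = q sin A`, determines `c ∂A`.
The four equations are `c ∂σ ∓ ε c ∂A` rewritten in terms of `tan A`.
-/

open Real

noncomputable section

/-- Partial derivative in the `x` direction. -/
def pdx (f : ℝ × ℝ → ℝ) (p : ℝ × ℝ) : ℝ := fderiv ℝ f p (1, 0)

/-- Partial derivative in the `y` direction. -/
def pdy (f : ℝ × ℝ → ℝ) (p : ℝ × ℝ) : ℝ := fderiv ℝ f p (0, 1)

/-- Directional derivative along the direction with angle `θ p`. -/
def dd (θ : ℝ × ℝ → ℝ) (f : ℝ × ℝ → ℝ) (p : ℝ × ℝ) : ℝ :=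
  Real.cos (θ p) * pdx f p + Real.sin (θ p) * pdy f p

/-- Sound speed `c = √(γ s ρ^(γ-1))`. -/
def sound (γ : ℝ) (ρ s : ℝ × ℝ → ℝ) (p : ℝ × ℝ) : ℝ :=
  Real.sqrt (γ * s p * ρ p ^ (γ - 1))

/-- Flow speed `q = √(u² + v²)`. -/
def speed (u v : ℝ × ℝ → ℝ) (p : ℝ × ℝ) : ℝ :=
  Real.sqrt (u p ^ 2 + v p ^ 2)

/-- Vorticity `ω = u_y − vₓ`. -/
def vort (u v : ℝ × ℝ → ℝ) (p : ℝ × ℝ) : ℝ := pdy u p - pdx v p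

/-- `j = c/(γ(γ−1)s)`. -/
def jay (γ : ℝ) (ρ s : ℝ × ℝ → ℝ) (p : ℝ × ℝ) : ℝ :=
  sound γ ρ s p / (γ * (γ - 1) * s p)

/-- `κ = 2/(γ−1)`. -/
def kap (γ : ℝ) : ℝ := 2 / (γ - 1)

/-- `Ω = (κ−1)/(κ+1) − tan²A`. -/
def Om (γ : ℝ) (A : ℝ × ℝ → ℝ) (p : ℝ × ℝ) : ℝ :=
  (kap γ - 1) / (kap γ + 1) - Real.tan (A p) ^ 2


open Filter Topology

def unitVec (θ : ℝ) : ℝ × ℝ := (cos θ, sin θ)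

def normalVec (θ : ℝ) : ℝ × ℝ := (-sin θ, cos θ)

theorem unitVec_add (σ θ : ℝ) : unitVec (σ + θ) = cos θ • unitVec σ + sin θ • normalVec σ := by
  ext <;> simp [unitVec, normalVec, cos_add, sin_add] <;> ring

theorem fderiv_apply_mk (f : ℝ × ℝ → ℝ) (p : ℝ × ℝ) (a b : ℝ) :
    fderiv ℝ f p (a, b) = a * pdx f p + b * pdy f p := by
  have hab : ((a, b) : ℝ × ℝ) = a • (1, 0) + b • (0, 1) := by ext <;> simp
  rw [hab, map_add, map_smul, map_smul, smul_eq_mul, smul_eq_mul, pdx, pdy]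

theorem dd_eq_fderiv_unitVec (θ f : ℝ × ℝ → ℝ) (p : ℝ × ℝ) :
    dd θ f p = fderiv ℝ f p (unitVec (θ p)) := by
  rw [unitVec, fderiv_apply_mk, dd]

section Polar

variable {E : Type*} [NormedAddCommGroup E] [NormedSpace ℝ E] {f g h : E → ℝ} {p : E}

theorem fderiv_eq_of_eventuallyEq_mul_cos (hf : f =ᶠ[𝓝 p] fun z => g z * cos (h z))
    (hg : DifferentiableAt ℝ g p) (hh : DifferentiableAt ℝ h p) :
    fderiv ℝ f p = cos (h p) • fderiv ℝ g p - (g p * sin (h p)) • fderiv ℝ h p := by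
  rw [hf.fderiv_eq, fderiv_fun_mul hg hh.cos, fderiv_cos hh]
  module

theorem fderiv_eq_of_eventuallyEq_mul_sin (hf : f =ᶠ[𝓝 p] fun z => g z * sin (h z))
    (hg : DifferentiableAt ℝ g p) (hh : DifferentiableAt ℝ h p) :
    fderiv ℝ f p = sin (h p) • fderiv ℝ g p + (g p * cos (h p)) • fderiv ℝ h p := by
  rw [hf.fderiv_eq, fderiv_fun_mul hg hh.sin, fderiv_sin hh]
  module

end Polar

section Thermodynamics

variable {γ : ℝ} {ρ s : ℝ × ℝ → ℝ} {p : ℝ × ℝ}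

theorem kap_pos (hγ : 1 < γ) : 0 < kap γ :=
  div_pos two_pos (sub_pos.mpr hγ)

theorem sound_pos (hγ : 0 < γ) (hρ : 0 < ρ p) (hs : 0 < s p) : 0 < sound γ ρ s p :=
  sqrt_pos.mpr (by positivity)

theorem sound_sq (hγ : 0 < γ) (hρ : 0 < ρ p) (hs : 0 < s p) :
    sound γ ρ s p ^ 2 = γ * s p * ρ p ^ (γ - 1) :=
  sq_sqrt (by positivity)

theorem two_sound_smul_fderiv_sound (hγ : 0 < γ) (hρ : DifferentiableAt ℝ ρ p)
    (hs : DifferentiableAt ℝ s p) (hρpos : 0 < ρ p) (hspos : 0 < s p) :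
    (2 * sound γ ρ s p) • fderiv ℝ (sound γ ρ s) p =
      ((γ - 1) * sound γ ρ s p ^ 2 / ρ p) • fderiv ℝ ρ p
        + (sound γ ρ s p ^ 2 / s p) • fderiv ℝ s p := by
  have hc := sound_pos hγ hρpos hspos
  have hderiv := ((hs.hasFDerivAt.const_mul γ).fun_mul
    (hρ.hasFDerivAt.rpow_const (p := γ - 1) (Or.inl hρpos.ne'))).sqrt (by positivity)
  rw [show fderiv ℝ (sound γ ρ s) p = _ from hderiv.fderiv,
    show √(γ * s p * ρ p ^ (γ - 1)) = sound γ ρ s p from rfl, sound_sq hγ hρpos hspos,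
    rpow_sub_one hρpos.ne']
  refine ContinuousLinearMap.ext fun w => ?_
  simp only [add_apply, smul_apply, smul_eq_mul]
  field_simp

theorem inv_density_smul_fderiv_pressure (hγ : 1 < γ) (hρ : DifferentiableAt ℝ ρ p)
    (hs : DifferentiableAt ℝ s p) (hρpos : 0 < ρ p) (hspos : 0 < s p) :
    (ρ p)⁻¹ • fderiv ℝ (fun z => s z * ρ z ^ γ) p =
      (kap γ * sound γ ρ s p) • fderiv ℝ (sound γ ρ s) p
        - (sound γ ρ s p * jay γ ρ s p) • fderiv ℝ s p := by
  have hγ0 : 0 < γ := by linarith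
  have hγ1 : γ - 1 ≠ 0 := by linarith
  have hpow : ρ p ^ (γ - 1) = sound γ ρ s p ^ 2 / (γ * s p) := by
    rw [sound_sq hγ0 hρpos hspos]
    field_simp
  have hpow' : ρ p ^ γ = sound γ ρ s p ^ 2 / (γ * s p) * ρ p := by
    rw [← hpow, rpow_sub_one hρpos.ne']
    field_simp
  have hργ := hρ.hasFDerivAt.rpow_const (p := γ) (Or.inl hρpos.ne')
  rw [fderiv_fun_mul hs hργ.differentiableAt, hργ.fderiv, hpow, hpow']
  refine ContinuousLinearMap.ext fun w => ?_
  have hsw := congr($(two_sound_smul_fderiv_sound hγ0 hρ hs hρpos hspos) w)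
  simp only [add_apply, sub_apply, smul_apply, smul_eq_mul, kap, jay] at hsw ⊢
  field_simp at hsw ⊢
  linear_combination -γ * hsw

end Thermodynamics

section StreamlineCoordinates

variable {u v q σ : ℝ × ℝ → ℝ} {p : ℝ × ℝ}

theorem convective_eq (hup : u p = q p * cos (σ p)) (hvp : v p = q p * sin (σ p))
    (f : ℝ × ℝ → ℝ) : u p * pdx f p + v p * pdy f p = q p * fderiv ℝ f p (unitVec (σ p)) := by
  rw [unitVec, fderiv_apply_mk, hup, hvp]
  ring

theorem vort_eq_streamline
    (hdu : fderiv ℝ u p = cos (σ p) • fderiv ℝ q p - (q p * sin (σ p)) • fderiv ℝ σ p)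
    (hdv : fderiv ℝ v p = sin (σ p) • fderiv ℝ q p + (q p * cos (σ p)) • fderiv ℝ σ p) :
    vort u v p = fderiv ℝ q p (normalVec (σ p)) - q p * fderiv ℝ σ p (unitVec (σ p)) := by
  rw [unitVec, normalVec, fderiv_apply_mk, fderiv_apply_mk, vort, pdx, pdy, hdu, hdv]
  simp only [pdx, pdy, sub_apply, add_apply, smul_apply, smul_eq_mul]
  ring

theorem momentum_streamline {P : ℝ × ℝ → ℝ} {τ : ℝ}
    (hup : u p = q p * cos (σ p)) (hvp : v p = q p * sin (σ p))
    (hdu : fderiv ℝ u p = cos (σ p) • fderiv ℝ q p - (q p * sin (σ p)) • fderiv ℝ σ p)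
    (hdv : fderiv ℝ v p = sin (σ p) • fderiv ℝ q p + (q p * cos (σ p)) • fderiv ℝ σ p)
    (hx : u p * pdx u p + v p * pdy u p + τ * pdx P p = 0)
    (hy : u p * pdx v p + v p * pdy v p + τ * pdy P p = 0) :
    q p * fderiv ℝ q p (unitVec (σ p)) + τ * fderiv ℝ P p (unitVec (σ p)) = 0 ∧
      q p ^ 2 * fderiv ℝ σ p (unitVec (σ p)) + τ * fderiv ℝ P p (normalVec (σ p)) = 0 := by
  rw [convective_eq hup hvp, hdu] at hx
  rw [convective_eq hup hvp, hdv] at hy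
  simp only [sub_apply, add_apply, smul_apply, smul_eq_mul, unitVec, normalVec,
    fderiv_apply_mk] at hx hy ⊢
  constructor
  · linear_combination cos (σ p) * hx + sin (σ p) * hy
      - q p * (cos (σ p) * pdx q p + sin (σ p) * pdy q p) * cos_sq_add_sin_sq (σ p)
  · linear_combination -sin (σ p) * hx + cos (σ p) * hy
      - q p ^ 2 * (cos (σ p) * pdx σ p + sin (σ p) * pdy σ p) * cos_sq_add_sin_sq (σ p)

theorem mass_streamline {ρ : ℝ × ℝ → ℝ} (hρ : DifferentiableAt ℝ ρ p)
    (hu : DifferentiableAt ℝ u p) (hv : DifferentiableAt ℝ v p)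
    (hup : u p = q p * cos (σ p)) (hvp : v p = q p * sin (σ p))
    (hdu : fderiv ℝ u p = cos (σ p) • fderiv ℝ q p - (q p * sin (σ p)) • fderiv ℝ σ p)
    (hdv : fderiv ℝ v p = sin (σ p) • fderiv ℝ q p + (q p * cos (σ p)) • fderiv ℝ σ p)
    (h : pdx (fun z => ρ z * u z) p + pdy (fun z => ρ z * v z) p = 0) :
    ρ p * (fderiv ℝ q p (unitVec (σ p)) + q p * fderiv ℝ σ p (normalVec (σ p)))
      + q p * fderiv ℝ ρ p (unitVec (σ p)) = 0 := by
  rw [pdx, pdy, fderiv_fun_mul hρ hu, fderiv_fun_mul hρ hv, hdu, hdv, hup, hvp] at h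
  simp only [sub_apply, add_apply, smul_apply, smul_eq_mul, unitVec, normalVec,
    fderiv_apply_mk] at h ⊢
  linear_combination h

theorem mass_streamline_of_bernoulli {γ : ℝ} {ρ s : ℝ × ℝ → ℝ} (hγ : 1 < γ)
    (hρ : DifferentiableAt ℝ ρ p) (hs : DifferentiableAt ℝ s p)
    (hu : DifferentiableAt ℝ u p) (hv : DifferentiableAt ℝ v p)
    (hρpos : 0 < ρ p) (hspos : 0 < s p)
    (hup : u p = q p * cos (σ p)) (hvp : v p = q p * sin (σ p))
    (hdu : fderiv ℝ u p = cos (σ p) • fderiv ℝ q p - (q p * sin (σ p)) • fderiv ℝ σ p)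
    (hdv : fderiv ℝ v p = sin (σ p) • fderiv ℝ q p + (q p * cos (σ p)) • fderiv ℝ σ p)
    (hmass : pdx (fun z => ρ z * u z) p + pdy (fun z => ρ z * v z) p = 0)
    (hentropy : fderiv ℝ s p (unitVec (σ p)) = 0)
    (hbernoulli : q p * fderiv ℝ q p (unitVec (σ p))
      + kap γ * sound γ ρ s p * fderiv ℝ (sound γ ρ s) p (unitVec (σ p)) = 0) :
    (sound γ ρ s p ^ 2 - q p ^ 2) * fderiv ℝ q p (unitVec (σ p))
      + q p * sound γ ρ s p ^ 2 * fderiv ℝ σ p (normalVec (σ p)) = 0 := by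
  have hγ0 : 0 < γ := by linarith
  have hγ1 : γ - 1 ≠ 0 := by linarith
  have hmass' := mass_streamline hρ hu hv hup hvp hdu hdv hmass
  have hsound := congr($(two_sound_smul_fderiv_sound hγ0 hρ hs hρpos hspos) (unitVec (σ p)))
  simp only [add_apply, smul_apply, smul_eq_mul, hentropy, mul_zero, add_zero] at hsound
  simp only [kap] at hbernoulli
  field_simp at hsound hbernoulli
  apply mul_left_cancel₀ (show (γ - 1) * ρ p ≠ 0 by positivity)
  linear_combination sound γ ρ s p ^ 2 * (γ - 1) * hmass' + q p * hsound
    - q p * ρ p * hbernoulli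

end StreamlineCoordinates

/-- The steady Euler system at a point in streamline coordinates: `dq, dσ, dA, dc, ds` stand for
the differentials of `q, σ, A, c, s`, `e` for the flow direction and `n` for its normal. -/
structure EulerStreamlineForm {E : Type*} [NormedAddCommGroup E] [NormedSpace ℝ E]
    (κ j q c A ω : ℝ) (dq dσ dA dc ds : E →L[ℝ] ℝ) (e n : E) : Prop where
  sound_eq : c = q * sin A
  fderiv_sound : dc = sin A • dq + (q * cos A) • dA
  bernoulli : q * dq e + κ * c * dc e = 0
  mass : cos A ^ 2 * dq e = q * sin A ^ 2 * dσ n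
  normal_momentum : q ^ 2 * dσ e + κ * c * dc n - c * j * ds n = 0
  entropy : ds e = 0
  vort_eq : ω = dq n - q * dσ e

theorem EulerStreamlineForm.of_steadyEuler {γ : ℝ} {u v ρ s σ A : ℝ × ℝ → ℝ} {p : ℝ × ℝ}
    (hγ : 1 < γ) (hu : DifferentiableAt ℝ u p) (hv : DifferentiableAt ℝ v p)
    (hρ : DifferentiableAt ℝ ρ p) (hs : DifferentiableAt ℝ s p) (hσ : DifferentiableAt ℝ σ p)
    (hA : DifferentiableAt ℝ A p) (hρpos : 0 < ρ p) (hspos : 0 < s p) (hq : 0 < speed u v p)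
    (huσ : u =ᶠ[𝓝 p] fun z => speed u v z * cos (σ z))
    (hvσ : v =ᶠ[𝓝 p] fun z => speed u v z * sin (σ z))
    (hcA : sound γ ρ s =ᶠ[𝓝 p] fun z => speed u v z * sin (A z))
    (hmass : pdx (fun z => ρ z * u z) p + pdy (fun z => ρ z * v z) p = 0)
    (hmomx : u p * pdx u p + v p * pdy u p + (ρ p)⁻¹ * pdx (fun z => s z * ρ z ^ γ) p = 0)
    (hmomy : u p * pdx v p + v p * pdy v p + (ρ p)⁻¹ * pdy (fun z => s z * ρ z ^ γ) p = 0)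
    (hent : u p * pdx s p + v p * pdy s p = 0) :
    EulerStreamlineForm (kap γ) (jay γ ρ s p) (speed u v p) (sound γ ρ s p) (A p) (vort u v p)
      (fderiv ℝ (speed u v) p) (fderiv ℝ σ p) (fderiv ℝ A p) (fderiv ℝ (sound γ ρ s) p)
      (fderiv ℝ s p) (unitVec (σ p)) (normalVec (σ p)) := by
  have hqd : DifferentiableAt ℝ (speed u v) p :=
    ((hu.pow 2).add (hv.pow 2)).sqrt (sqrt_pos.mp hq).ne'
  have hup := huσ.eq_of_nhds
  have hvp := hvσ.eq_of_nhds
  have hdu := fderiv_eq_of_eventuallyEq_mul_cos huσ hqd hσ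
  have hdv := fderiv_eq_of_eventuallyEq_mul_sin hvσ hqd hσ
  have hentropy : fderiv ℝ s p (unitVec (σ p)) = 0 := by
    rw [convective_eq hup hvp] at hent
    exact (mul_eq_zero.mp hent).resolve_left hq.ne'
  obtain ⟨hmom_e, hmom_n⟩ := momentum_streamline hup hvp hdu hdv hmomx hmomy
  have hgibbs := inv_density_smul_fderiv_pressure hγ hρ hs hρpos hspos
  have hgibbs_e := congr($hgibbs (unitVec (σ p)))
  have hgibbs_n := congr($hgibbs (normalVec (σ p)))
  simp only [sub_apply, smul_apply, smul_eq_mul] at hgibbs_e hgibbs_n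
  have hbernoulli : speed u v p * fderiv ℝ (speed u v) p (unitVec (σ p))
      + kap γ * sound γ ρ s p * fderiv ℝ (sound γ ρ s) p (unitVec (σ p)) = 0 := by
    linear_combination hmom_e - hgibbs_e + sound γ ρ s p * jay γ ρ s p * hentropy
  have hcont := mass_streamline_of_bernoulli hγ hρ hs hu hv hρpos hspos hup hvp hdu hdv hmass hentropy
    hbernoulli
  rw [hcA.eq_of_nhds] at hcont
  refine
    { sound_eq := hcA.eq_of_nhds
      fderiv_sound := fderiv_eq_of_eventuallyEq_mul_sin hcA hqd hA
      bernoulli := hbernoulli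
      mass := mul_left_cancel₀ (pow_ne_zero 2 hq.ne') ?_
      normal_momentum := by linear_combination hmom_n - hgibbs_n
      entropy := hentropy
      vort_eq := vort_eq_streamline hdu hdv }
  linear_combination -hcont
    + speed u v p ^ 2 * fderiv ℝ (speed u v) p (unitVec (σ p)) * sin_sq_add_cos_sq (A p)

namespace EulerStreamlineForm

variable {E : Type*} [NormedAddCommGroup E] [NormedSpace ℝ E] {κ j q c A ω ε : ℝ}
  {dq dσ dA dc ds : E →L[ℝ] ℝ} {e n w : E}

theorem crocco (h : EulerStreamlineForm κ j q c A ω dq dσ dA dc ds e n)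
    (hw : w = cos A • e + (ε * sin A) • n) :
    q * dq w + κ * c * dc w = ε * c * ω + c * j * ds w := by
  subst hw
  simp only [map_add, map_smul, smul_eq_mul]
  linear_combination cos A * h.bernoulli + ε * sin A * h.normal_momentum
    - ε * sin A * q * h.vort_eq - ε * ω * h.sound_eq - c * j * cos A * h.entropy

theorem mul_fderiv_flowAngle (h : EulerStreamlineForm κ j q c A ω dq dσ dA dc ds e n)
    (hε : ε ^ 2 = 1) (hc : c ≠ 0) (hw : w = cos A • e + (ε * sin A) • n) :
    c * dσ w = ε * sin A * cos A * (j * ds w - κ * dc w) := by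
  apply mul_left_cancel₀ hc
  subst hw
  simp only [map_add, map_smul, smul_eq_mul]
  -- the `e`-part of `dσ w` comes from normal momentum, the `n`-part from continuity and Bernoulli
  linear_combination ε * sin A * cos A ^ 2 * h.bernoulli
    + ε ^ 2 * sin A ^ 2 * cos A * h.normal_momentum
    - ε * c * sin A * cos A ^ 2 * j * h.entropy - ε * q * sin A * h.mass
    + (q * sin A + c) * (cos A * dσ e + ε * sin A * dσ n) * h.sound_eq
    - q ^ 2 * sin A ^ 2 * cos A * dσ e * hε

theorem mul_fderiv_machAngle (h : EulerStreamlineForm κ j q c A ω dq dσ dA dc ds e n)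
    (hc : c ≠ 0) (hK : cos A ≠ 0) (hw : w = cos A • e + (ε * sin A) • n) :
    c * dA w =
      tan A * ((1 + κ * sin A ^ 2) * dc w - ε * sin A ^ 2 * ω - sin A ^ 2 * j * ds w) := by
  have hq : q ≠ 0 := by
    rintro rfl
    simp [h.sound_eq] at hc
  have hdc : dc w = sin A * dq w + q * cos A * dA w := by
    simp [h.fderiv_sound]
  rw [tan_eq_sin_div_cos]
  field_simp
  apply mul_left_cancel₀ hq
  linear_combination -c * hdc - sin A ^ 2 * h.crocco hw
    + ((1 + κ * sin A ^ 2) * dc w - sin A * dq w - ε * sin A ^ 2 * ω - sin A ^ 2 * j * ds w)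
      * h.sound_eq

theorem charAngle_opposite (h : EulerStreamlineForm κ j q c A ω dq dσ dA dc ds e n)
    (hε : ε ^ 2 = 1) (hc : c ≠ 0) (hK : cos A ≠ 0) (hw : w = cos A • e + (ε * sin A) • n) :
    c * (dσ w - ε * dA w) =
      ε * (-(1 + κ) * tan A * dc w + j * tan A * ds w) + ω * sin A ^ 2 * tan A := by
  rw [mul_sub, mul_left_comm, h.mul_fderiv_flowAngle hε hc hw, h.mul_fderiv_machAngle hc hK hw,
    tan_eq_sin_div_cos]
  field_simp
  linear_combination ε * sin A * (j * ds w - κ * dc w) * sin_sq_add_cos_sq A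
    + sin A ^ 3 * ω * hε

theorem charAngle_self (h : EulerStreamlineForm κ j q c A ω dq dσ dA dc ds e n)
    (hε : ε ^ 2 = 1) (hc : c ≠ 0) (hK : cos A ≠ 0) (hκ : κ + 1 ≠ 0)
    (hw : w = cos A • e + (ε * sin A) • n) :
    c * (dσ w + ε * dA w) =
      ε * (-((1 + κ) / 2) * ((κ - 1) / (κ + 1) - tan A ^ 2) * sin (2 * A) * dc w
        + j * tan A * cos (2 * A) * ds w) - ω * sin A ^ 2 * tan A := by
  rw [mul_add, mul_left_comm, h.mul_fderiv_flowAngle hε hc hw, h.mul_fderiv_machAngle hc hK hw,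
    tan_eq_sin_div_cos, sin_two_mul, cos_two_mul']
  field_simp
  linear_combination -(ε * sin A * (1 + κ) * dc w) * sin_sq_add_cos_sq A
    - (1 + κ) * sin A ^ 3 * ω * hε

end EulerStreamlineForm

/-- characteristic equations for the characteristic angles `α`, `β`. -/
theorem stmt_5 (γ : ℝ) (hγ : 1 < γ) (U : Set (ℝ × ℝ)) (hU : IsOpen U)
    (u v ρ s σ A : ℝ × ℝ → ℝ)
    (hu : ContDiffOn ℝ 1 u U) (hv : ContDiffOn ℝ 1 v U)
    (hρ : ContDiffOn ℝ 1 ρ U) (hs : ContDiffOn ℝ 1 s U)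
    (hσ : ContDiffOn ℝ 1 σ U) (hA : ContDiffOn ℝ 1 A U)
    (hρpos : ∀ p ∈ U, 0 < ρ p) (hspos : ∀ p ∈ U, 0 < s p)
    (hmass : ∀ p ∈ U, pdx (fun q => ρ q * u q) p + pdy (fun q => ρ q * v q) p = 0)
    (hmomx : ∀ p ∈ U,
      u p * pdx u p + v p * pdy u p + (ρ p)⁻¹ * pdx (fun q => s q * ρ q ^ γ) p = 0)
    (hmomy : ∀ p ∈ U,
      u p * pdx v p + v p * pdy v p + (ρ p)⁻¹ * pdy (fun q => s q * ρ q ^ γ) p = 0)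
    (hent : ∀ p ∈ U, u p * pdx s p + v p * pdy s p = 0)
    (hsup : ∀ p ∈ U, (sound γ ρ s p) ^ 2 < u p ^ 2 + v p ^ 2)
    (huσ : ∀ p ∈ U, u p = speed u v p * Real.cos (σ p))
    (hvσ : ∀ p ∈ U, v p = speed u v p * Real.sin (σ p))
    (hsinA : ∀ p ∈ U, Real.sin (A p) = sound γ ρ s p / speed u v p)
    (hA0 : ∀ p ∈ U, 0 < A p) (hA2 : ∀ p ∈ U, A p < Real.pi / 2)
    :
    ∀ p ∈ U,
      (sound γ ρ s p * dd (fun q => σ q + A q) (fun q => σ q - A q) p =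
        -(1 + kap γ) * Real.tan (A p) * dd (fun q => σ q + A q) (sound γ ρ s) p +
        vort u v p * Real.sin (A p) ^ 2 * Real.tan (A p) +
        jay γ ρ s p * Real.tan (A p) * dd (fun q => σ q + A q) s p) ∧
      (sound γ ρ s p * dd (fun q => σ q + A q) (fun q => σ q + A q) p =
        -((1 + kap γ) / 2) * Om γ A p * Real.sin (2 * A p) *
          dd (fun q => σ q + A q) (sound γ ρ s) p -
        vort u v p * Real.sin (A p) ^ 2 * Real.tan (A p) +
        jay γ ρ s p * Real.tan (A p) * Real.cos (2 * A p) * dd (fun q => σ q + A q) s p) ∧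
      (sound γ ρ s p * dd (fun q => σ q - A q) (fun q => σ q + A q) p =
        (1 + kap γ) * Real.tan (A p) * dd (fun q => σ q - A q) (sound γ ρ s) p +
        vort u v p * Real.sin (A p) ^ 2 * Real.tan (A p) -
        jay γ ρ s p * Real.tan (A p) * dd (fun q => σ q - A q) s p) ∧
      (sound γ ρ s p * dd (fun q => σ q - A q) (fun q => σ q - A q) p =
        ((1 + kap γ) / 2) * Om γ A p * Real.sin (2 * A p) *
          dd (fun q => σ q - A q) (sound γ ρ s) p -
        vort u v p * Real.sin (A p) ^ 2 * Real.tan (A p) -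
        jay γ ρ s p * Real.tan (A p) * Real.cos (2 * A p) * dd (fun q => σ q - A q) s p) := by
  intro p hp
  have hUp : U ∈ 𝓝 p := hU.mem_nhds hp
  have hdiff {f : ℝ × ℝ → ℝ} (hf : ContDiffOn ℝ 1 f U) : DifferentiableAt ℝ f p :=
    (hf.contDiffAt hUp).differentiableAt one_ne_zero
  have hspeed {z : ℝ × ℝ} (hz : z ∈ U) : 0 < speed u v z :=
    sqrt_pos.mpr ((sq_nonneg _).trans_lt (hsup z hz))
  have hcA : sound γ ρ s =ᶠ[𝓝 p] fun z => speed u v z * sin (A z) := by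
    filter_upwards [hUp] with z hz
    rw [hsinA z hz]
    field_simp [(hspeed hz).ne']
  have h := EulerStreamlineForm.of_steadyEuler hγ (hdiff hu) (hdiff hv) (hdiff hρ) (hdiff hs)
    (hdiff hσ) (hdiff hA) (hρpos p hp) (hspos p hp) (hspeed hp)
    (eventually_of_mem hUp huσ) (eventually_of_mem hUp hvσ) hcA
    (hmass p hp) (hmomx p hp) (hmomy p hp) (hent p hp)
  have hc := (sound_pos (by linarith) (hρpos p hp) (hspos p hp)).ne'
  have hK := (cos_pos_of_mem_Ioo ⟨by linarith [hA0 p hp, pi_pos], hA2 p hp⟩).ne'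
  have hκ := (add_pos (kap_pos hγ) one_pos).ne'
  have hplus : unitVec (σ p + A p) =
      cos (A p) • unitVec (σ p) + (1 * sin (A p)) • normalVec (σ p) := by
    rw [one_mul, unitVec_add]
  have hminus : unitVec (σ p - A p) =
      cos (A p) • unitVec (σ p) + (-1 * sin (A p)) • normalVec (σ p) := by
    rw [neg_one_mul, sub_eq_add_neg, unitVec_add, cos_neg, sin_neg]
  simp only [dd_eq_fderiv_unitVec, Om, fderiv_fun_add (hdiff hσ) (hdiff hA),
    fderiv_fun_sub (hdiff hσ) (hdiff hA), add_apply, sub_apply]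
  refine ⟨?_, ?_, ?_, ?_⟩
  · linear_combination h.charAngle_opposite (by norm_num) hc hK hplus
  · linear_combination h.charAngle_self (by norm_num) hc hK hκ hplus
  · linear_combination h.charAngle_opposite (by norm_num) hc hK hminus
  · linear_combination h.charAngle_self (by norm_num) hc hK hκ hminus

end
end

section
/- Let (u, v, ρ, s) be a C² solution of the smooth-flow 2D steady full Euler system on U with ρ > 0, s > 0, and let ω = u_y − vₓ, τ = 1/ρ. Then the vorticity satisfies the transport equation u ωₓ + v ω_y + (uₓ + v_y)ω + τ^{−γ}(τ_y sₓ − τₓ s_y) = 0 on U. -/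
/-! Taking the curl of the momentum equations, i.e. `∂_y` of the `x`-equation minus `∂_x` of the
`y`-equation, and using the symmetry of second derivatives gives
`u ωₓ + v ω_y + (uₓ + v_y) ω + ∂(P, τ)/∂(x, y) = 0` for any pressure `P`. For `P = s ρ^γ` the
Jacobian `∂(ρ^γ, τ)/∂(x, y)` vanishes because `ρ^γ` and `τ = ρ⁻¹` are both functions of `ρ`, so
`∂(P, τ)/∂(x, y) = ρ^γ ∂(s, τ)/∂(x, y)`, and `ρ^γ = τ^(-γ)`. -/

open Real

noncomputable section

open Filter Topology

section Directional

variable {𝕜 E F : Type*} [RCLike 𝕜] [NormedAddCommGroup E] [NormedSpace 𝕜 E]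
  [NormedAddCommGroup F] [NormedSpace 𝕜 F] {f : E → F} {x : E}

theorem ContDiffAt.differentiableAt_fderiv_apply (hf : ContDiffAt 𝕜 2 f x) (w : E) :
    DifferentiableAt 𝕜 (fun y => fderiv 𝕜 f y w) x :=
  ((hf.fderiv_right (m := 1) le_rfl).differentiableAt one_ne_zero).clm_apply
    (differentiableAt_const w)

theorem ContDiffAt.fderiv_fderiv_apply_comm (hf : ContDiffAt 𝕜 2 f x) (v w : E) :
    fderiv 𝕜 (fun y => fderiv 𝕜 f y w) x v = fderiv 𝕜 (fun y => fderiv 𝕜 f y v) x w := by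
  have hd := (hf.fderiv_right (m := 1) le_rfl).differentiableAt one_ne_zero
  simp only [fderiv_clm_apply hd (differentiableAt_const _), fderiv_fun_const]
  simpa using hf.isSymmSndFDerivAt (by simp) v w

theorem fderiv_apply_eq_zero_of_forall_mem {s : Set E} (hs : s ∈ 𝓝 x)
    (h : ∀ y ∈ s, f y = 0) (w : E) : fderiv 𝕜 f x w = 0 := by
  rw [(eventuallyEq_of_mem hs h : f =ᶠ[𝓝 x] fun _ => 0).fderiv_eq]
  simp

theorem fderiv_comp_apply_eq_deriv_mul {g : 𝕜 → 𝕜} {ρ : E → 𝕜} (hg : DifferentiableAt 𝕜 g (ρ x))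
    (hρ : DifferentiableAt 𝕜 ρ x) (w : E) :
    fderiv 𝕜 (fun y => g (ρ y)) x w = deriv g (ρ x) * fderiv 𝕜 ρ x w := by
  have h : fderiv 𝕜 (fun y => g (ρ y)) x = deriv g (ρ x) • fderiv 𝕜 ρ x :=
    (hg.hasDerivAt.comp_hasFDerivAt x hρ.hasFDerivAt).fderiv
  simp [h]

end Directional

section Partial

variable {f g : ℝ × ℝ → ℝ} {p : ℝ × ℝ}

theorem pdx_add (hf : DifferentiableAt ℝ f p) (hg : DifferentiableAt ℝ g p) :
    pdx (fun q => f q + g q) p = pdx f p + pdx g p := by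
  simp [pdx, fderiv_fun_add hf hg]

theorem pdy_add (hf : DifferentiableAt ℝ f p) (hg : DifferentiableAt ℝ g p) :
    pdy (fun q => f q + g q) p = pdy f p + pdy g p := by
  simp [pdy, fderiv_fun_add hf hg]

theorem pdx_sub (hf : DifferentiableAt ℝ f p) (hg : DifferentiableAt ℝ g p) :
    pdx (fun q => f q - g q) p = pdx f p - pdx g p := by
  simp [pdx, fderiv_fun_sub hf hg]

theorem pdy_sub (hf : DifferentiableAt ℝ f p) (hg : DifferentiableAt ℝ g p) :
    pdy (fun q => f q - g q) p = pdy f p - pdy g p := by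
  simp [pdy, fderiv_fun_sub hf hg]

theorem pdx_mul (hf : DifferentiableAt ℝ f p) (hg : DifferentiableAt ℝ g p) :
    pdx (fun q => f q * g q) p = pdx f p * g p + f p * pdx g p := by
  simp [pdx, fderiv_fun_mul hf hg]
  ring

theorem pdy_mul (hf : DifferentiableAt ℝ f p) (hg : DifferentiableAt ℝ g p) :
    pdy (fun q => f q * g q) p = pdy f p * g p + f p * pdy g p := by
  simp [pdy, fderiv_fun_mul hf hg]
  ring

theorem ContDiffAt.differentiableAt_pdx (hf : ContDiffAt ℝ 2 f p) : DifferentiableAt ℝ (pdx f) p :=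
  hf.differentiableAt_fderiv_apply _

theorem ContDiffAt.differentiableAt_pdy (hf : ContDiffAt ℝ 2 f p) : DifferentiableAt ℝ (pdy f) p :=
  hf.differentiableAt_fderiv_apply _

theorem ContDiffAt.pdx_pdy_comm (hf : ContDiffAt ℝ 2 f p) : pdx (pdy f) p = pdy (pdx f) p :=
  hf.fderiv_fderiv_apply_comm _ _

end Partial

def jacobian (f g : ℝ × ℝ → ℝ) (p : ℝ × ℝ) : ℝ := pdx f p * pdy g p - pdy f p * pdx g p

section Vorticity

variable {u v τ P ρ s : ℝ × ℝ → ℝ} {p : ℝ × ℝ}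

theorem curl_convective (hu : ContDiffAt ℝ 2 u p) (hv : ContDiffAt ℝ 2 v p) :
    pdy (fun q => u q * pdx u q + v q * pdy u q) p - pdx (fun q => u q * pdx v q + v q * pdy v q) p
      = u p * pdx (vort u v) p + v p * pdy (vort u v) p + (pdx u p + pdy v p) * vort u v p := by
  have hu₁ := hu.differentiableAt two_ne_zero
  have hv₁ := hv.differentiableAt two_ne_zero
  have hux := hu.differentiableAt_pdx
  have huy := hu.differentiableAt_pdy
  have hvx := hv.differentiableAt_pdx
  have hvy := hv.differentiableAt_pdy
  have hωx : pdx (vort u v) p = pdx (pdy u) p - pdx (pdx v) p := pdx_sub huy hvx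
  have hωy : pdy (vort u v) p = pdy (pdy u) p - pdy (pdx v) p := pdy_sub huy hvx
  rw [pdy_add (hu₁.fun_mul hux) (hv₁.fun_mul huy), pdy_mul hu₁ hux, pdy_mul hv₁ huy,
    pdx_add (hu₁.fun_mul hvx) (hv₁.fun_mul hvy), pdx_mul hu₁ hvx, pdx_mul hv₁ hvy, hωx, hωy,
    hu.pdx_pdy_comm, hv.pdx_pdy_comm, vort]
  ring

theorem curl_mul_grad (hτ : DifferentiableAt ℝ τ p) (hP : ContDiffAt ℝ 2 P p) :
    pdy (fun q => τ q * pdx P q) p - pdx (fun q => τ q * pdy P q) p = jacobian P τ p := by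
  rw [pdy_mul hτ hP.differentiableAt_pdx, pdx_mul hτ hP.differentiableAt_pdy, hP.pdx_pdy_comm,
    jacobian]
  ring

theorem jacobian_mul_left (hs : DifferentiableAt ℝ s p) (hρ : DifferentiableAt ℝ ρ p) :
    jacobian (fun q => s q * ρ q) τ p = ρ p * jacobian s τ p + s p * jacobian ρ τ p := by
  rw [jacobian, jacobian, jacobian, pdx_mul hs hρ, pdy_mul hs hρ]
  ring

theorem jacobian_comp_comp {g h : ℝ → ℝ} (hg : DifferentiableAt ℝ g (ρ p))
    (hh : DifferentiableAt ℝ h (ρ p)) (hρ : DifferentiableAt ℝ ρ p) :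
    jacobian (fun q => g (ρ q)) (fun q => h (ρ q)) p = 0 := by
  rw [jacobian, pdx, pdy, pdx, pdy, fderiv_comp_apply_eq_deriv_mul hg hρ,
    fderiv_comp_apply_eq_deriv_mul hg hρ, fderiv_comp_apply_eq_deriv_mul hh hρ,
    fderiv_comp_apply_eq_deriv_mul hh hρ]
  ring

theorem curl_momentum (hu : ContDiffAt ℝ 2 u p) (hv : ContDiffAt ℝ 2 v p)
    (hτ : DifferentiableAt ℝ τ p) (hP : ContDiffAt ℝ 2 P p) :
    pdy (fun q => u q * pdx u q + v q * pdy u q + τ q * pdx P q) p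
        - pdx (fun q => u q * pdx v q + v q * pdy v q + τ q * pdy P q) p
      = u p * pdx (vort u v) p + v p * pdy (vort u v) p + (pdx u p + pdy v p) * vort u v p
        + jacobian P τ p := by
  have hu₁ := hu.differentiableAt two_ne_zero
  have hv₁ := hv.differentiableAt two_ne_zero
  rw [pdy_add ((hu₁.fun_mul hu.differentiableAt_pdx).fun_add (hv₁.fun_mul hu.differentiableAt_pdy))
      (hτ.fun_mul hP.differentiableAt_pdx),
    pdx_add ((hu₁.fun_mul hv.differentiableAt_pdx).fun_add (hv₁.fun_mul hv.differentiableAt_pdy))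
      (hτ.fun_mul hP.differentiableAt_pdy)]
  linear_combination curl_convective hu hv + curl_mul_grad hτ hP

theorem jacobian_mul_rpow_inv {γ : ℝ} (hs : DifferentiableAt ℝ s p) (hρ : DifferentiableAt ℝ ρ p)
    (hρ₀ : ρ p ≠ 0) :
    jacobian (fun q => s q * ρ q ^ γ) (fun q => (ρ q)⁻¹) p
      = ρ p ^ γ * jacobian s (fun q => (ρ q)⁻¹) p := by
  rw [jacobian_mul_left hs (hρ.rpow_const (Or.inl hρ₀)),
    jacobian_comp_comp (g := fun x => x ^ γ) (h := fun x => x⁻¹)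
      (differentiableAt_rpow_const_of_ne γ hρ₀) (differentiableAt_inv hρ₀) hρ]
  ring

end Vorticity

theorem stmt_12_general (γ : ℝ) (U : Set (ℝ × ℝ)) (hU : IsOpen U)
    (u v ρ s : ℝ × ℝ → ℝ)
    (hu : ContDiffOn ℝ 2 u U) (hv : ContDiffOn ℝ 2 v U)
    (hρ : ContDiffOn ℝ 2 ρ U) (hs : ContDiffOn ℝ 2 s U)
    (hρpos : ∀ p ∈ U, 0 < ρ p)
    (hmomx : ∀ p ∈ U,
      u p * pdx u p + v p * pdy u p + (ρ p)⁻¹ * pdx (fun q => s q * ρ q ^ γ) p = 0)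
    (hmomy : ∀ p ∈ U,
      u p * pdx v p + v p * pdy v p + (ρ p)⁻¹ * pdy (fun q => s q * ρ q ^ γ) p = 0) :
    ∀ p ∈ U,
      u p * pdx (vort u v) p + v p * pdy (vort u v) p +
        (pdx u p + pdy v p) * vort u v p +
        ((ρ p)⁻¹) ^ (-γ) *
          (pdy (fun q => (ρ q)⁻¹) p * pdx s p - pdx (fun q => (ρ q)⁻¹) p * pdy s p) = 0 := by
  intro p hp
  have hUp : U ∈ 𝓝 p := hU.mem_nhds hp
  have hρ₀ : 0 < ρ p := hρpos p hp
  have hρ₂ := hρ.contDiffAt hUp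
  have hs₂ := hs.contDiffAt hUp
  have hρ₁ := hρ₂.differentiableAt two_ne_zero
  have hcurl := curl_momentum (τ := fun q => (ρ q)⁻¹) (P := fun q => s q * ρ q ^ γ)
    (hu.contDiffAt hUp) (hv.contDiffAt hUp) (hρ₁.inv hρ₀.ne')
    (hs₂.mul (hρ₂.rpow_const_of_ne hρ₀.ne'))
  have hmomx_dy : pdy _ p = 0 := fderiv_apply_eq_zero_of_forall_mem hUp hmomx _
  have hmomy_dx : pdx _ p = 0 := fderiv_apply_eq_zero_of_forall_mem hUp hmomy _
  rw [hmomx_dy, hmomy_dx,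
    jacobian_mul_rpow_inv (hs₂.differentiableAt two_ne_zero) hρ₁ hρ₀.ne', jacobian] at hcurl
  rw [inv_rpow hρ₀.le, rpow_neg hρ₀.le, inv_inv]
  linear_combination -hcurl

/-- the vorticity of a C² solution of the smooth-flow 2D steady full
Euler system satisfies `u ωₓ + v ω_y + (uₓ + v_y)ω + τ^(−γ)(τ_y sₓ − τₓ s_y) = 0`,
where `τ = 1/ρ`. -/
theorem stmt_12 (γ : ℝ) (hγ : 1 < γ) (U : Set (ℝ × ℝ)) (hU : IsOpen U)
    (u v ρ s : ℝ × ℝ → ℝ)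
    (hu : ContDiffOn ℝ 2 u U) (hv : ContDiffOn ℝ 2 v U)
    (hρ : ContDiffOn ℝ 2 ρ U) (hs : ContDiffOn ℝ 2 s U)
    (hρpos : ∀ p ∈ U, 0 < ρ p) (hspos : ∀ p ∈ U, 0 < s p)
    (hmass : ∀ p ∈ U, pdx (fun q => ρ q * u q) p + pdy (fun q => ρ q * v q) p = 0)
    (hmomx : ∀ p ∈ U,
      u p * pdx u p + v p * pdy u p + (ρ p)⁻¹ * pdx (fun q => s q * ρ q ^ γ) p = 0)
    (hmomy : ∀ p ∈ U,
      u p * pdx v p + v p * pdy v p + (ρ p)⁻¹ * pdy (fun q => s q * ρ q ^ γ) p = 0)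
    (hent : ∀ p ∈ U, u p * pdx s p + v p * pdy s p = 0) :
    ∀ p ∈ U,
      u p * pdx (vort u v) p + v p * pdy (vort u v) p +
        (pdx u p + pdy v p) * vort u v p +
        ((ρ p)⁻¹) ^ (-γ) *
          (pdy (fun q => (ρ q)⁻¹) p * pdx s p - pdx (fun q => (ρ q)⁻¹) p * pdy s p) = 0 :=
  stmt_12_general γ U hU u v ρ s hu hv hρ hs hρpos hmomx hmomy

end
end
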